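/- arXiv:0904.3674 — 4 statements merged into one kernel-verified Lean document; each statement's English description precedes it below -/
import Mathlib

section
/- Let A be an associative k-algebra with |k| ≥ n+1, let a_1, …, a_m ∈ A, and let W be a k-subspace of A. If (α_1 a_1 + … + α_m a_m)^n ∈ W for all α_1, …, α_m ∈ k, then P_n(a_1,…,a_m) ⊆ W. -/
/-- `pWord a i` is the polynomial `p_{i_1,…,i_m}(a_1,…,a_m)`: the sum, over all distinct
words in `m` letters containing exactly `i_j` occurrences of letter `j` for each `j`,
of the corresponding products of `a_1,…,a_m`. -/
noncomputable def pWord {A : Type*} [Ring A] {m : ℕ} (a : Fin m → A) (i : Fin m → ℕ) : A :=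
  ∑ w ∈ (Finset.univ : Finset (Fin (∑ j, i j) → Fin m)).filter
      (fun w => ∀ j, (List.ofFn w).count j = i j),
    ((List.ofFn w).map a).prod

/-- `Pdeg k a n` is `P_n(a_1,…,a_m)`, the `k`-span of
`{p_{i_1,…,i_m}(a_1,…,a_m) : i_1+…+i_m = n}`. -/
noncomputable def Pdeg (k : Type*) [Field k] {A : Type*} [Ring A] [Algebra k A]
    {m : ℕ} (a : Fin m → A) (n : ℕ) : Submodule k A :=
  Submodule.span k {x | ∃ i : Fin m → ℕ, (∑ j, i j) = n ∧ x = pWord a i}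

/-!
Expanding over words, `(∑ α_j a_j)^n = ∑_{|i| = n} α^i p_i(a)`. Modulo `W`, and after applying any
linear functional on `A ⧸ W`, the right-hand side is a homogeneous polynomial of degree `n` in `α`
over `k` that vanishes on all of `k^m`; as `n ≤ |k|`, it is the zero polynomial, so each
`p_i(a)` lies in `W`.
-/

open Finset MvPolynomial

theorem sum_pow_eq_sum_prod_map_ofFn {M : Type*} [Semiring M] {m : ℕ} (f : Fin m → M)
    (n : ℕ) :
    (∑ j, f j) ^ n = ∑ w : Fin n → Fin m, ((List.ofFn w).map f).prod := by
  induction n with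
  | zero => simp
  | succ n ih =>
    rw [pow_succ', ih, sum_mul_sum, ← (Fin.consEquiv fun _ => Fin m).sum_comp,
      Fintype.sum_prod_type]
    simp [Fin.consEquiv, List.ofFn_succ]

theorem List.prod_map_smul_eq_smul_prod {R A ι : Type*} [CommSemiring R] [Semiring A] [Algebra R A]
    (α : ι → R) (a : ι → A) (l : List ι) :
    (l.map fun j => α j • a j).prod = (l.map α).prod • (l.map a).prod := by
  induction l with
  | nil => simp
  | cons j l ih => simp only [List.map_cons, List.prod_cons, ih, smul_mul_smul_comm]

theorem List.sum_count_eq_length {ι : Type*} [Fintype ι] [DecidableEq ι] (l : List ι) :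
    ∑ j, l.count j = l.length := by
  simpa using Multiset.sum_count_eq_card (s := univ) (m := (l : Multiset ι)) (by simp)

theorem List.prod_map_eq_prod_pow_count {ι M : Type*} [CommMonoid M] [Fintype ι] [DecidableEq ι]
    (l : List ι) (f : ι → M) : (l.map f).prod = ∏ j, f j ^ l.count j := by
  rw [prod_list_map_count]
  exact prod_subset (subset_univ _) fun j _ hj => by
    simp [List.count_eq_zero_of_not_mem (by simpa using hj)]

theorem pWord_eq_sum_filter {A : Type*} [Ring A] {m n : ℕ} (a : Fin m → A) (i : Fin m → ℕ)
    (hi : ∑ j, i j = n) :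
    pWord a i = ∑ w : Fin n → Fin m with (fun j => (List.ofFn w).count j) = i,
      ((List.ofFn w).map a).prod := by
  subst hi
  simp only [pWord, funext_iff]

theorem sum_smul_pow_eq_sum_pWord {k A : Type*} [CommSemiring k] [Ring A] [Algebra k A] {m : ℕ}
    (α : Fin m → k) (a : Fin m → A) (n : ℕ) :
    (∑ j, α j • a j) ^ n = ∑ i ∈ Nat.antidiagonalTuple m n, (∏ j, α j ^ i j) • pWord a i := by
  classical
  rw [sum_pow_eq_sum_prod_map_ofFn, ← sum_fiberwise_of_maps_to
    (g := fun (w : Fin n → Fin m) j => (List.ofFn w).count j)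
    fun w _ => Nat.mem_antidiagonalTuple.2 <| by simpa using (List.ofFn w).sum_count_eq_length]
  refine sum_congr rfl fun i hi => ?_
  rw [pWord_eq_sum_filter a i (Nat.mem_antidiagonalTuple.1 hi), smul_sum]
  refine sum_congr rfl fun w hw => ?_
  rw [List.prod_map_smul_eq_smul_prod, List.prod_map_eq_prod_pow_count,
    ← (mem_filter.1 hw).2]

theorem eq_zero_of_forall_sum_mul_prod_pow_eq_zero {R σ : Type*} [CommRing R] [IsDomain R]
    [Fintype σ] {n : ℕ} (hn : (n : Cardinal) ≤ Cardinal.mk R) (S : Finset (σ → ℕ))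
    (hS : ∀ i ∈ S, ∑ j, i j = n) (c : (σ → ℕ) → R)
    (h : ∀ α : σ → R, ∑ i ∈ S, c i * ∏ j, α j ^ i j = 0) :
    ∀ i ∈ S, c i = 0 := by
  classical
  let F : MvPolynomial σ R := ∑ i ∈ S, monomial (Finsupp.equivFunOnFinite.symm i) (c i)
  have hF : F.IsHomogeneous n := IsHomogeneous.sum _ _ _ fun i hi =>
    isHomogeneous_monomial _ (by simpa [Finsupp.degree_eq_sum] using hS i hi)
  have hF0 : F = 0 := hF.eq_zero_of_forall_eval_eq_zero_of_le_card (fun α => by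
    simpa [F, eval_monomial, Finsupp.prod_fintype] using h α) hn
  intro i hi
  simpa [F, coeff_sum, coeff_monomial, hi] using
    congr_arg (coeff (Finsupp.equivFunOnFinite.symm i)) hF0

theorem eq_zero_of_forall_sum_prod_pow_smul_eq_zero {k V σ : Type*} [Field k] [AddCommGroup V]
    [Module k V] [Fintype σ] {n : ℕ} (hn : (n : Cardinal) ≤ Cardinal.mk k) (S : Finset (σ → ℕ))
    (hS : ∀ i ∈ S, ∑ j, i j = n) (c : (σ → ℕ) → V)
    (h : ∀ α : σ → k, ∑ i ∈ S, (∏ j, α j ^ i j) • c i = 0) :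
    ∀ i ∈ S, c i = 0 := by
  intro i hi
  rw [← Module.forall_dual_apply_eq_zero_iff k]
  intro φ
  refine eq_zero_of_forall_sum_mul_prod_pow_eq_zero hn S hS (fun i => φ (c i)) (fun α => ?_) i hi
  simpa [mul_comm] using congr_arg φ (h α)

/-- If `|k| ≥ n+1`, `a_1,…,a_m ∈ A`, `W` is a `k`-subspace of `A`, and
`(α_1 a_1 + … + α_m a_m)^n ∈ W` for all `α_1,…,α_m ∈ k`, then `P_n(a_1,…,a_m) ⊆ W`. -/
theorem Pdeg_le_of_forall_pow_linear_mem
    (k : Type*) [Field k] (A : Type*) [Ring A] [Algebra k A]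
    (m n : ℕ) (hcard : (n + 1 : Cardinal) ≤ Cardinal.mk k)
    (a : Fin m → A) (W : Submodule k A)
    (h : ∀ α : Fin m → k, (∑ j, α j • a j) ^ n ∈ W) :
    Pdeg k a n ≤ W := by
  rw [Pdeg, Submodule.span_le]
  rintro _ ⟨i, hi, rfl⟩
  have hn : (n : Cardinal) ≤ Cardinal.mk k := le_trans (by norm_cast; omega) hcard
  have hpow : ∀ α : Fin m → k,
      ∑ i ∈ Nat.antidiagonalTuple m n, (∏ j, α j ^ i j) • W.mkQ (pWord a i) = 0 := fun α => by
    have hzero : W.mkQ ((∑ j, α j • a j) ^ n) = 0 := (Submodule.Quotient.mk_eq_zero W).2 (h α)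
    simpa only [sum_smul_pow_eq_sum_pWord, map_sum, map_smul] using hzero
  have hquot : W.mkQ (pWord a i) = 0 :=
    eq_zero_of_forall_sum_prod_pow_smul_eq_zero hn _ (fun _ => Nat.mem_antidiagonalTuple.1) _ hpow
      i (Nat.mem_antidiagonalTuple.2 hi)
  exact (Submodule.Quotient.mk_eq_zero W).1 hquot
end

section
/- Let A be an associative algebra over an infinite field k and let a_1, …, a_m ∈ A. Then the subspace k a_1 + … + k a_m is algebraic of bounded degree (there exists d ≥ 1 such that every element is algebraic of degree at most d) if and only if dim_k P_{≥1}(a_1,…,a_m) < ∞. -/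
section Multinomial

variable {R A : Type*} [CommSemiring R] [Ring A] [Algebra R A] {m : ℕ}

theorem pow_sum_smul_eq_sum_smul_prod (a : Fin m → A) (c : Fin m → R) (n : ℕ) :
    (∑ j, c j • a j) ^ n =
      ∑ w : Fin n → Fin m, (∏ t, c (w t)) • ((List.ofFn w).map a).prod := by
  rw [← MultilinearMap.mkPiAlgebraFin_apply_const (R := R), MultilinearMap.map_sum]
  simp [MultilinearMap.map_smul_univ, List.map_ofFn, Function.comp_def]

theorem prod_comp_eq_prod_pow_count_ofFn {M : Type*} [CommMonoid M] {n : ℕ} (c : Fin m → M)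
    (w : Fin n → Fin m) : ∏ t, c (w t) = ∏ j, c j ^ (List.ofFn w).count j := by
  rw [← List.prod_ofFn, ← Function.comp_def, ← List.map_ofFn, Finset.prod_list_map_count]
  refine Finset.prod_subset (Finset.subset_univ _) fun j _ hj => ?_
  rw [List.count_eq_zero_of_not_mem (mt List.mem_toFinset.2 hj), pow_zero]

theorem sum_count_ofFn {n : ℕ} (w : Fin n → Fin m) : ∑ j, (List.ofFn w).count j = n := by
  simpa using Multiset.sum_count_eq_card (s := Finset.univ) (m := (List.ofFn w : Multiset (Fin m)))
    fun j _ => Finset.mem_univ j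

theorem pow_sum_smul_eq_sum_smul_pWord (a : Fin m → A) (c : Fin m → R) (n : ℕ) :
    (∑ j, c j • a j) ^ n =
      ∑ i ∈ Finset.Nat.antidiagonalTuple m n, (∏ j, c j ^ i j) • pWord a i := by
  rw [pow_sum_smul_eq_sum_smul_prod, ← Finset.sum_fiberwise_of_maps_to
    (g := fun w : Fin n → Fin m => fun j => (List.ofFn w).count j)
    (fun w _ => Finset.Nat.mem_antidiagonalTuple.2 (sum_count_ofFn w))]
  refine Finset.sum_congr rfl fun i hi => ?_
  obtain rfl := Finset.Nat.mem_antidiagonalTuple.1 hi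
  rw [pWord, Finset.smul_sum]
  refine Finset.sum_congr (by simp [funext_iff]) fun w hw => ?_
  simp only [prod_comp_eq_prod_pow_count_ofFn, (Finset.mem_filter.1 hw).2]

end Multinomial

section Polarization

variable {k : Type*} [Field k] {m : ℕ}

theorem eq_zero_of_forall_sum_prod_pow_mul_eq_zero {R : Type*} [CommRing R] [IsDomain R]
    [Infinite R] {s : Finset (Fin m → ℕ)} {b : (Fin m → ℕ) → R}
    (h : ∀ c : Fin m → R, ∑ i ∈ s, (∏ j, c j ^ i j) * b i = 0) {i : Fin m → ℕ} (hi : i ∈ s) :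
    b i = 0 := by
  set p : MvPolynomial (Fin m) R :=
    ∑ i ∈ s, MvPolynomial.monomial (Finsupp.equivFunOnFinite.symm i) (b i)
  have hp : p = 0 := MvPolynomial.funext fun c => by
    simpa [p, MvPolynomial.eval_monomial, Finsupp.prod_fintype, mul_comm] using h c
  simpa [p, MvPolynomial.coeff_sum, MvPolynomial.coeff_monomial, hi] using
    congrArg (MvPolynomial.coeff (Finsupp.equivFunOnFinite.symm i)) hp

theorem eq_zero_of_forall_sum_prod_pow_smul_eq_zero_s15 [Infinite k] {Q : Type*} [AddCommGroup Q]
    [Module k Q] {s : Finset (Fin m → ℕ)} {v : (Fin m → ℕ) → Q}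
    (h : ∀ c : Fin m → k, ∑ i ∈ s, (∏ j, c j ^ i j) • v i = 0) {i : Fin m → ℕ} (hi : i ∈ s) :
    v i = 0 :=
  (Module.forall_dual_apply_eq_zero_iff k (v i)).1 fun f =>
    eq_zero_of_forall_sum_prod_pow_mul_eq_zero (fun c => by simpa using congrArg f (h c)) hi

variable {A : Type*} [Ring A] [Algebra k A]

instance finiteDimensional_Pdeg (a : Fin m → A) (n : ℕ) : FiniteDimensional k (Pdeg k a n) :=
  FiniteDimensional.span_of_finite k <|
    ((Finset.Nat.antidiagonalTuple m n).finite_toSet.image (pWord a)).subset <| by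
      rintro _ ⟨i, hi, rfl⟩
      exact ⟨i, Finset.Nat.mem_antidiagonalTuple.2 hi, rfl⟩

theorem pow_mem_Pdeg (a : Fin m → A) {u : A} (hu : u ∈ Submodule.span k (Set.range a))
    (n : ℕ) : u ^ n ∈ Pdeg k a n := by
  obtain ⟨c, rfl⟩ := (Submodule.mem_span_range_iff_exists_fun k).1 hu
  rw [pow_sum_smul_eq_sum_smul_pWord]
  exact Submodule.sum_mem _ fun i hi => Submodule.smul_mem _ _ <|
    Submodule.subset_span ⟨i, Finset.Nat.mem_antidiagonalTuple.1 hi, rfl⟩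

theorem Pdeg_eq_span_pow [Infinite k] (a : Fin m → A) (n : ℕ) :
    Pdeg k a n = Submodule.span k ((· ^ n) '' (Submodule.span k (Set.range a) : Set A)) := by
  set W := Submodule.span k ((· ^ n) '' (Submodule.span k (Set.range a) : Set A))
  refine le_antisymm (Submodule.span_le.2 ?_) (Submodule.span_le.2 ?_)
  · rintro _ ⟨i, hi, rfl⟩
    -- Modulo `W` the polynomial map `c ↦ (∑ c_j a_j)^n` vanishes, hence so do its coefficients.
    have hc : ∀ c : Fin m → k, ∑ i ∈ Finset.Nat.antidiagonalTuple m n,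
        (∏ j, c j ^ i j) • W.mkQ (pWord a i) = 0 := fun c => by
      simp_rw [← map_smul, ← map_sum, ← pow_sum_smul_eq_sum_smul_pWord]
      refine (Submodule.Quotient.mk_eq_zero _).2 (Submodule.subset_span ⟨_, ?_, rfl⟩)
      exact Submodule.sum_mem _ fun j _ => Submodule.smul_mem _ _ (Submodule.subset_span ⟨j, rfl⟩)
    simpa using eq_zero_of_forall_sum_prod_pow_smul_eq_zero_s15 hc
      (Finset.Nat.mem_antidiagonalTuple.2 hi)
  · rintro _ ⟨u, hu, rfl⟩
    exact pow_mem_Pdeg a hu n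

end Polarization

section Powers

open Polynomial

theorem mul_mem_of_mem_span {R A : Type*} [CommSemiring R] [Semiring A] [Algebra R A]
    {M : Submodule R A} {s : Set A} {x : A} (y : A) (hx : x ∈ Submodule.span R s)
    (h : ∀ z ∈ s, y * z ∈ M) : y * x ∈ M :=
  (Submodule.span_le (p := M.comap (LinearMap.mulLeft R y))).2 h hx

variable {R A : Type*} [CommSemiring R] [Semiring A] [Algebra R A] {u : A}

theorem pow_mem_span_pow_Icc_of_pow_succ_mem {d : ℕ}
    (h : u ^ (d + 1) ∈ Submodule.span R ((u ^ ·) '' Set.Icc 1 d)) {n : ℕ} (hn : 1 ≤ n) :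
    u ^ n ∈ Submodule.span R ((u ^ ·) '' Set.Icc 1 d) := by
  induction n using Nat.strong_induction_on with
  | _ n ih =>
    rcases le_or_gt n d with hnd | hdn
    · exact Submodule.subset_span ⟨n, ⟨hn, hnd⟩, rfl⟩
    · rw [← Nat.sub_add_cancel hdn, pow_add]
      refine mul_mem_of_mem_span _ h ?_
      rintro _ ⟨r, ⟨hr1, hr2⟩, rfl⟩
      rw [← pow_add]
      exact ih _ (by omega) (by omega)

theorem pow_succ_mem_span_pow_Icc_of_le {d e : ℕ}
    (h : u ^ (d + 1) ∈ Submodule.span R ((u ^ ·) '' Set.Icc 1 d)) (hde : d ≤ e) :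
    u ^ (e + 1) ∈ Submodule.span R ((u ^ ·) '' Set.Icc 1 e) :=
  Submodule.span_mono (Set.image_mono (Set.Icc_subset_Icc le_rfl hde))
    (pow_mem_span_pow_Icc_of_pow_succ_mem h (Nat.le_add_left 1 e))

end Powers

section Relations

open Polynomial

variable {R A : Type*} [CommRing R] [Ring A] [Algebra R A] {u : A}

theorem pow_succ_mem_span_pow_Icc_of_aeval_eq_zero {p : R[X]} {d : ℕ} (hp : p.Monic)
    (hd : p.natDegree = d + 1) (h0 : p.coeff 0 = 0) (hu : aeval u p = 0) :
    u ^ (d + 1) ∈ Submodule.span R ((u ^ ·) '' Set.Icc 1 d) := by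
  rw [aeval_eq_sum_range, Finset.sum_range_succ, hp.coeff_natDegree, one_smul, hd] at hu
  rw [eq_neg_of_add_eq_zero_right hu]
  refine Submodule.neg_mem _ (Submodule.sum_mem _ fun i hi => ?_)
  rcases Nat.eq_zero_or_pos i with rfl | hi0
  · rw [h0, zero_smul]
    exact Submodule.zero_mem _
  · have := Finset.mem_range.1 hi
    exact Submodule.smul_mem _ _ (Submodule.subset_span ⟨i, ⟨hi0, by omega⟩, rfl⟩)

theorem pow_finrank_succ_mem_span_pow_Icc {k : Type*} [Field k] [Algebra k A]
    {V : Submodule k A} [FiniteDimensional k V] (hV : ∀ n, 1 ≤ n → u ^ n ∈ V) :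
    u ^ (Module.finrank k V + 1) ∈
      Submodule.span k ((u ^ ·) '' Set.Icc 1 (Module.finrank k V)) := by
  set W := Submodule.span k ((u ^ ·) '' Set.Ici 1)
  have hWV : W ≤ V := Submodule.span_le.2 <| by
    rintro _ ⟨n, hn, rfl⟩
    exact hV n hn
  have : FiniteDimensional k W := Submodule.finiteDimensional_of_le hWV
  have hinv : ∀ x ∈ W, LinearMap.mulLeft k u x ∈ W := fun x hx => mul_mem_of_mem_span u hx <| by
    rintro _ ⟨n, hn, rfl⟩
    exact Submodule.subset_span ⟨n + 1, by simp, pow_succ' u n⟩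
  set f := (LinearMap.mulLeft k u).restrict hinv
  have hf : ∀ (p : k[X]) (x : W), (aeval f p x : A) = aeval u p * x := fun p x => by
    have hpow : ∀ i, ((f ^ i) x : A) = u ^ i * x := fun i => by
      rw [Module.End.pow_restrict]
      simp
    simp [aeval_eq_sum_range, hpow, Finset.sum_mul]
  have hχ : aeval u (f.charpoly * X) = 0 := by
    -- Cayley–Hamilton for `f`, evaluated at `u ∈ W`: `0 = χ(f) u = χ(u) * u`.
    have := congrArg (fun g => (g ⟨u, Submodule.subset_span ⟨1, Set.self_mem_Ici, pow_one u⟩⟩ : A))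
      (LinearMap.aeval_self_charpoly f)
    simpa [hf] using this
  have hdeg : (f.charpoly * X).natDegree = Module.finrank k W + 1 := by
    rw [natDegree_mul_X f.charpoly_monic.ne_zero, LinearMap.charpoly_natDegree]
  exact pow_succ_mem_span_pow_Icc_of_le (pow_succ_mem_span_pow_Icc_of_aeval_eq_zero
    (f.charpoly_monic.mul monic_X) hdeg (by simp) hχ) (Submodule.finrank_mono hWV)

end Relations

/-- Over an infinite field `k`, the subspace `k a_1 + … + k a_m` is algebraic of bounded
degree (there exists `d ≥ 1` such that every element is algebraic of degree at most `d`)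
if and only if `dim_k P_{≥1}(a_1,…,a_m) < ∞`. -/
theorem algebraic_bounded_iff_finiteDimensional_Pge
    (k : Type*) [Field k] [Infinite k] (A : Type*) [Ring A] [Algebra k A]
    (m : ℕ) (a : Fin m → A) :
    (∃ d : ℕ, 1 ≤ d ∧ ∀ u ∈ Submodule.span k (Set.range a),
        u ^ d ∈ Submodule.span k ((fun i : ℕ => u ^ i) '' Set.Icc 1 (d - 1))) ↔
      FiniteDimensional k ↥(⨆ n ∈ Set.Ici 1, Pdeg k a n) := by
  constructor
  · rintro ⟨_, hd, h⟩
    obtain ⟨d, rfl⟩ := Nat.exists_eq_add_of_le' hd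
    simp only [Nat.add_sub_cancel] at h
    have hle : ⨆ n ∈ Set.Ici 1, Pdeg k a n ≤ ⨆ r : Fin (d + 1), Pdeg k a r := by
      refine iSup₂_le fun n hn => ?_
      rw [Pdeg_eq_span_pow, Submodule.span_le]
      rintro _ ⟨u, hu, rfl⟩
      refine Submodule.span_le.2 ?_ (pow_mem_span_pow_Icc_of_pow_succ_mem (h u hu) hn)
      rintro _ ⟨r, ⟨-, hr⟩, rfl⟩
      exact Submodule.mem_iSup_of_mem (⟨r, by omega⟩ : Fin (d + 1)) (pow_mem_Pdeg a hu r)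
    exact Submodule.finiteDimensional_of_le hle
  · intro _
    refine ⟨Module.finrank k ↥(⨆ n ∈ Set.Ici 1, Pdeg k a n) + 1, le_add_self, fun u hu => ?_⟩
    rw [Nat.add_sub_cancel]
    exact pow_finrank_succ_mem_span_pow_Icc fun n hn =>
      le_iSup₂ (f := fun n (_ : n ∈ Set.Ici 1) => Pdeg k a n) n hn (pow_mem_Pdeg a hu n)
end

section
/- Let k be an infinite field and let A be an associative k-algebra with filtration {F_n}_{n≥0}. Fix r ≥ 1 and suppose every element of F_r is algebraic of degree at most d_r. Then every element of the subspace F_1/F_0 ⊕ ⋯ ⊕ F_r/F_{r−1} of gr(A) satisfies b^N = 0, where N = (d_r − 1)·r + 1; in particular this subspace is nil of bounded index at most r·d_r. -/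
/-! Write `b = ∑_{n=1}^r φ_n(x_n)` with `x_n ∈ F_n` and put `S = ∑ x_n X^n ∈ A[X]`. Extending
each `φ_n` linearly to `A` gives a graded evaluation `A[X] → gr A` that is multiplicative on
polynomials whose `n`-th coefficient lies in `F_n`, so `b^N` is the evaluation of `S^N`.
For every `t ∈ k` the element `S(t)` lies in `F_r`, so `S(t)^N` lies in the span of
`S(t), …, S(t)^(d-1)`, which is contained in `F_{(d-1)r}`. Since `k` is infinite, a Vandermonde
argument puts every coefficient of `S^N` in `F_{(d-1)r}`. These coefficients vanish below degree
`N = (d-1)r + 1`, and in degree `m ≥ N` they lie in `F_{m-1}`, the kernel of `φ_m`. -/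

open Polynomial Finset

section GradedEvaluation

variable {R A C : Type*} [CommSemiring R] [Semiring A] [Module R A] [Semiring C] [Module R C]
  {F : ℕ → Submodule R A}

theorem Polynomial.lsum_monomial {M : Type*} [AddCommMonoid M] [Module R M]
    (g : ℕ → A →ₗ[R] M) (n : ℕ) (a : A) :
    lsum g (monomial n a) = g n a :=
  sum_monomial_index _ _ (map_zero _)

theorem Polynomial.coeff_mul_mem_of_coeff_mem
    (hmulF : ∀ i j : ℕ, ∀ x ∈ F i, ∀ y ∈ F j, x * y ∈ F (i + j))
    {p q : A[X]} (hp : ∀ i, p.coeff i ∈ F i) (hq : ∀ i, q.coeff i ∈ F i) (n : ℕ) :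
    (p * q).coeff n ∈ F n := by
  rw [coeff_mul]
  refine Submodule.sum_mem _ fun ij hij => ?_
  rw [← mem_antidiagonal.mp hij]
  exact hmulF _ _ _ (hp _) _ (hq _)

theorem Polynomial.coeff_pow_succ_mem_of_coeff_mem
    (hmulF : ∀ i j : ℕ, ∀ x ∈ F i, ∀ y ∈ F j, x * y ∈ F (i + j))
    {p : A[X]} (hp : ∀ i, p.coeff i ∈ F i) (e n : ℕ) : (p ^ (e + 1)).coeff n ∈ F n := by
  induction e generalizing n with
  | zero => simpa using hp n
  | succ e ih => rw [pow_succ]; exact coeff_mul_mem_of_coeff_mem hmulF ih hp n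

theorem Polynomial.lsum_mul_of_coeff_mem (g : ℕ → A →ₗ[R] C)
    (hg : ∀ i j, ∀ x ∈ F i, ∀ y ∈ F j, g i x * g j y = g (i + j) (x * y))
    {p q : A[X]} (hp : ∀ i, p.coeff i ∈ F i) (hq : ∀ i, q.coeff i ∈ F i) :
    lsum g (p * q) = lsum g p * lsum g q := by
  rw [mul_eq_sum_sum, map_sum]
  simp only [Polynomial.sum_def, map_sum, lsum_monomial]
  simp only [lsum_apply, Polynomial.sum_def, Finset.sum_mul_sum]
  exact Finset.sum_congr rfl fun i _ => Finset.sum_congr rfl fun j _ =>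
    (hg i j _ (hp i) _ (hq j)).symm

theorem Polynomial.lsum_pow_succ_of_coeff_mem
    (hmulF : ∀ i j : ℕ, ∀ x ∈ F i, ∀ y ∈ F j, x * y ∈ F (i + j)) (g : ℕ → A →ₗ[R] C)
    (hg : ∀ i j, ∀ x ∈ F i, ∀ y ∈ F j, g i x * g j y = g (i + j) (x * y))
    {p : A[X]} (hp : ∀ i, p.coeff i ∈ F i) (e : ℕ) :
    lsum g (p ^ (e + 1)) = lsum g p ^ (e + 1) := by
  induction e with
  | zero => simp
  | succ e ih =>
    rw [pow_succ, lsum_mul_of_coeff_mem g hg (coeff_pow_succ_mem_of_coeff_mem hmulF hp e) hp,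
      ih, ← pow_succ]

theorem Polynomial.lsum_eq_zero_of_coeff_mem_pred (g : ℕ → A →ₗ[R] C)
    (hg : ∀ n, ∀ x ∈ F n, g (n + 1) x = 0) {p : A[X]} (hp0 : p.coeff 0 = 0)
    (hp : ∀ n, p.coeff (n + 1) ∈ F n) : lsum g p = 0 := by
  rw [lsum_apply, Polynomial.sum_def]
  refine Finset.sum_eq_zero fun m _ => ?_
  cases m with
  | zero => rw [hp0, map_zero]
  | succ n => exact hg n _ (hp n)

theorem Polynomial.coeff_pow_eq_zero_of_lt {p : A[X]} (hp0 : p.coeff 0 = 0) {m n : ℕ}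
    (hmn : m < n) : (p ^ n).coeff m = 0 := by
  obtain ⟨q, rfl⟩ := X_dvd_iff.mpr hp0
  rw [(commute_X q).mul_pow, coeff_X_pow_mul', if_neg (not_le.mpr hmn)]

end GradedEvaluation

theorem Submodule.mem_of_forall_sum_pow_smul_mem {k M : Type*} [Field k] [Infinite k]
    [AddCommGroup M] [Module k M] (W : Submodule k M) {v : ℕ → M} {D : ℕ}
    (h : ∀ t : k, ∑ i ∈ range D, t ^ i • v i ∈ W) {m : ℕ} (hm : m < D) : v m ∈ W := by
  rw [← W.ker_mkQ, LinearMap.mem_ker, ← Module.forall_dual_apply_eq_zero_iff k]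
  intro f
  have hroots : ∀ t : k, (∑ i ∈ range D, monomial i (f (W.mkQ (v i)))).eval t = 0 := fun t => by
    have : f (W.mkQ (∑ i ∈ range D, t ^ i • v i)) = 0 := by
      rw [Submodule.mkQ_apply, (Submodule.Quotient.mk_eq_zero W).mpr (h t), map_zero]
    simp only [map_sum, map_smul] at this
    simpa [eval_finsetSum, mul_comm] using this
  have := congr(coeff $(Polynomial.funext (q := 0) (by simpa using hroots)) m)
  simpa [finsetSum_coeff, coeff_monomial, hm] using this

section Filtration

variable {R A : Type*} [CommSemiring R] [Semiring A] [Algebra R A]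

theorem pow_mem_span_pow_Icc {s : A} {d : ℕ}
    (hs : s ^ d ∈ Submodule.span R ((fun i : ℕ => s ^ i) '' Set.Icc 1 (d - 1))) {e : ℕ}
    (he : d ≤ e) : s ^ e ∈ Submodule.span R ((fun i : ℕ => s ^ i) '' Set.Icc 1 (d - 1)) := by
  set V := Submodule.span R ((fun i : ℕ => s ^ i) '' Set.Icc 1 (d - 1))
  have hV : V ≤ V.comap (LinearMap.mulRight R s) := by
    refine Submodule.span_le.mpr ?_
    rintro _ ⟨i, ⟨hi1, hi2⟩, rfl⟩
    change s ^ i * s ∈ V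
    rw [← pow_succ]
    rcases (by omega : i + 1 ≤ d - 1 ∨ i + 1 = d) with hlt | rfl
    · exact Submodule.subset_span ⟨i + 1, ⟨by omega, hlt⟩, rfl⟩
    · exact hs
  induction e, he using Nat.le_induction with
  | base => exact hs
  | succ e _ ih => rw [pow_succ]; exact hV ih

variable {F : ℕ → Submodule R A}

theorem pow_succ_mem_of_mem (hmulF : ∀ i j : ℕ, ∀ x ∈ F i, ∀ y ∈ F j, x * y ∈ F (i + j))
    {r : ℕ} {s : A} (hs : s ∈ F r) (n : ℕ) : s ^ (n + 1) ∈ F ((n + 1) * r) := by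
  induction n with
  | zero => simpa using hs
  | succ n ih => rw [pow_succ, add_one_mul]; exact hmulF _ _ _ ih _ hs

theorem pow_mem_of_pow_mem_span_pow (hmono : Monotone F)
    (hmulF : ∀ i j : ℕ, ∀ x ∈ F i, ∀ y ∈ F j, x * y ∈ F (i + j)) {r d e : ℕ} {s : A}
    (hs : s ∈ F r) (halg : s ^ d ∈ Submodule.span R ((fun i : ℕ => s ^ i) '' Set.Icc 1 (d - 1)))
    (he : d ≤ e) : s ^ e ∈ F ((d - 1) * r) := by
  refine Submodule.span_le.mpr ?_ (pow_mem_span_pow_Icc halg he)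
  rintro _ ⟨i, ⟨hi1, hi2⟩, rfl⟩
  obtain ⟨n, rfl⟩ := Nat.exists_eq_add_of_le' hi1
  exact hmono (Nat.mul_le_mul_right r hi2) (pow_succ_mem_of_mem hmulF hs n)

def truncatedRees (F : ℕ → Submodule R A) (r : ℕ) : Submodule R A[X] where
  carrier := {p | ∀ i, p.coeff i ∈ F i ∧ (i = 0 ∨ r < i → p.coeff i = 0)}
  add_mem' hp hq i := ⟨add_mem (hp i).1 (hq i).1, fun hi => by simp [(hp i).2 hi, (hq i).2 hi]⟩
  zero_mem' i := ⟨zero_mem _, fun _ => coeff_zero i⟩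
  smul_mem' c p hp i := ⟨by rw [coeff_smul]; exact Submodule.smul_mem _ c (hp i).1,
    fun hi => by simp [(hp i).2 hi]⟩

theorem iSup_range_le_map_lsum_truncatedRees {M : Type*} [AddCommMonoid M] [Module R M]
    {φ : ∀ n, F n →ₗ[R] M} {g : ℕ → A →ₗ[R] M} (hg : ∀ n (x : F n), g n x = φ n x) (r : ℕ) :
    ⨆ n ∈ Finset.Icc 1 r, LinearMap.range (φ n) ≤ (truncatedRees F r).map (lsum g) := by
  refine iSup₂_le fun n hn => ?_
  rintro _ ⟨x, rfl⟩
  refine ⟨monomial n (x : A), fun i => ?_, by rw [lsum_monomial, hg]⟩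
  rw [Finset.mem_Icc] at hn
  rw [coeff_monomial]
  split_ifs with h
  · exact ⟨h ▸ x.2, by omega⟩
  · exact ⟨zero_mem _, fun _ => rfl⟩

end Filtration

theorem coeff_pow_succ_mem_of_forall_pow_succ_mem {k A : Type*} [Field k] [Infinite k] [Ring A]
    [Algebra k A] {F : ℕ → Submodule k A} (hmono : Monotone F) {r e : ℕ} {S : A[X]}
    (hS : S ∈ truncatedRees F r) {W : Submodule k A} (hW : ∀ s ∈ F r, s ^ (e + 1) ∈ W)
    (m : ℕ) : (S ^ (e + 1)).coeff m ∈ W := by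
  -- `lsum (ev t)` evaluates a polynomial at the scalar `t`
  let ev : k → ℕ → A →ₗ[k] A := fun t n => t ^ n • LinearMap.id
  have hev_mul : ∀ t i j, ∀ x ∈ (⊤ : Submodule k A), ∀ y ∈ (⊤ : Submodule k A),
      ev t i x * ev t j y = ev t (i + j) (x * y) := fun t i j x _ y _ => by
    simp only [ev, LinearMap.smul_apply, LinearMap.id_apply, smul_mul_smul_comm, pow_add]
  have hev_mem : ∀ t, lsum (ev t) S ∈ F r := fun t => by
    refine Submodule.sum_mem _ fun i hi => Submodule.smul_mem _ _ (hmono ?_ (hS i).1)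
    by_contra! h
    exact mem_support_iff.mp hi ((hS i).2 (Or.inr h))
  have hev_pow : ∀ t, lsum (ev t) (S ^ (e + 1)) ∈ W := fun t => by
    rw [lsum_pow_succ_of_coeff_mem (fun _ _ _ _ _ _ => Submodule.mem_top) (ev t) (hev_mul t)
      (fun _ => Submodule.mem_top)]
    exact hW _ (hev_mem t)
  rcases lt_or_ge m ((S ^ (e + 1)).natDegree + 1) with hm | hm
  · refine W.mem_of_forall_sum_pow_smul_mem (fun t => ?_) hm
    simpa [lsum_apply, sum_over_range, ev] using hev_pow t
  · rw [coeff_eq_zero_of_natDegree_lt hm]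
    exact zero_mem W

theorem gr_nilpotency_index_bound_general
    (k : Type*) [Field k] [Infinite k]
    (A : Type*) [Ring A] [Algebra k A]
    (F : ℕ → Submodule k A)
    (hmono : Monotone F)
    (hmulF : ∀ i j : ℕ, ∀ x ∈ F i, ∀ y ∈ F j, x * y ∈ F (i + j))
    (B : Type*) [Ring B] [Algebra k B]
    (φ : ∀ n : ℕ, F n →ₗ[k] B)
    (hker : ∀ n : ℕ, ∀ x : F (n + 1), φ (n + 1) x = 0 ↔ (x : A) ∈ F n)
    (hmulφ : ∀ p q : ℕ, ∀ x : F p, ∀ y : F q,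
      φ p x * φ q y = φ (p + q) ⟨(x : A) * (y : A), hmulF p q _ x.2 _ y.2⟩)
    (r d : ℕ) (hr : 1 ≤ r) (hd : 1 ≤ d)
    (halg : ∀ s ∈ F r, s ^ d ∈ Submodule.span k ((fun i : ℕ => s ^ i) '' Set.Icc 1 (d - 1))) :
    ∀ b ∈ ⨆ n ∈ Finset.Icc 1 r, LinearMap.range (φ n),
      b ^ ((d - 1) * r + 1) = 0 ∧ b ^ (r * d) = 0 := by
  intro b hb
  -- the graded evaluation of `A[X]` in `B` is `lsum g`
  choose g hg using fun n => (φ n).exists_extend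
  have hgφ : ∀ n (x : F n), g n x = φ n x := fun n x => LinearMap.congr_fun (hg n) x
  have hg_mul : ∀ i j, ∀ x ∈ F i, ∀ y ∈ F j, g i x * g j y = g (i + j) (x * y) :=
    fun i j x hx y hy => by simpa only [← hgφ] using hmulφ i j ⟨x, hx⟩ ⟨y, hy⟩
  have hg_ker : ∀ n, ∀ x ∈ F n, g (n + 1) x = 0 := fun n x hx =>
    (hgφ _ ⟨x, hmono n.le_succ hx⟩).trans ((hker n _).mpr hx)
  obtain ⟨S, hS, rfl⟩ := iSup_range_le_map_lsum_truncatedRees hgφ r hb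
  have hS0 : S.coeff 0 = 0 := (hS 0).2 (Or.inl rfl)
  have hdN : d ≤ (d - 1) * r + 1 := by
    have := Nat.le_mul_of_pos_right (d - 1) hr
    omega
  have hN : lsum g S ^ ((d - 1) * r + 1) = 0 := by
    rw [← lsum_pow_succ_of_coeff_mem hmulF g hg_mul fun i => (hS i).1]
    refine lsum_eq_zero_of_coeff_mem_pred g hg_ker (coeff_pow_eq_zero_of_lt hS0 (Nat.succ_pos _))
      fun n => ?_
    rcases lt_or_ge (n + 1) ((d - 1) * r + 1) with hn | hn
    · rw [coeff_pow_eq_zero_of_lt hS0 hn]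
      exact zero_mem _
    · refine hmono (show (d - 1) * r ≤ n by omega) ?_
      exact coeff_pow_succ_mem_of_forall_pow_succ_mem hmono hS
        (fun s hs => pow_mem_of_pow_mem_span_pow hmono hmulF hs (halg s hs) hdN) (n + 1)
  refine ⟨hN, pow_eq_zero_of_le ?_ hN⟩
  obtain ⟨d, rfl⟩ := Nat.exists_eq_add_of_le' hd
  rw [Nat.add_sub_cancel, mul_add_one, mul_comm]
  omega

/-- Let `k` be an infinite field, `A` an associative `k`-algebra with filtration
`F_0 ⊆ F_1 ⊆ ⋯`, and fix `r ≥ 1`.  Suppose every element of `F_r` is algebraic of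
degree at most `d_r` (with `d_r ≥ 1`).  Then every element `b` of the subspace
`F_1/F_0 ⊕ ⋯ ⊕ F_r/F_{r−1}` of `gr(A)` satisfies `b^N = 0` for `N = (d_r − 1)·r + 1`;
in particular this subspace is nil of bounded index at most `r·d_r`.

The associated graded algebra `gr(A) = ⊕_{n≥0} F_n/F_{n−1}` (with `F_{−1} = 0`) is
presented by an algebra `B` together with `k`-linear maps `φ n : F n → B` realizing the
quotient maps `F_n → F_n/F_{n−1} ⊆ gr(A)`: the kernel of `φ n` is exactly `F_{n-1}`
(with `φ 0` injective), and `φ p x * φ q y = φ (p+q) (x*y)`, which encodes the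
multiplication of `gr(A)`.  The subspace `F_1/F_0 ⊕ ⋯ ⊕ F_r/F_{r−1}` is then
`⨆ n ∈ [1, r], range (φ n)`. -/
theorem gr_nilpotency_index_bound
    (k : Type*) [Field k] [Infinite k]
    (A : Type*) [Ring A] [Algebra k A]
    (F : ℕ → Submodule k A)
    (hmono : Monotone F)
    (hexh : ∀ a : A, ∃ n : ℕ, a ∈ F n)
    (hmulF : ∀ i j : ℕ, ∀ x ∈ F i, ∀ y ∈ F j, x * y ∈ F (i + j))
    (B : Type*) [Ring B] [Algebra k B]
    (φ : ∀ n : ℕ, F n →ₗ[k] B)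
    (hker0 : ∀ x : F 0, φ 0 x = 0 ↔ (x : A) = 0)
    (hker : ∀ n : ℕ, ∀ x : F (n + 1), φ (n + 1) x = 0 ↔ (x : A) ∈ F n)
    (hmulφ : ∀ p q : ℕ, ∀ x : F p, ∀ y : F q,
      φ p x * φ q y = φ (p + q) ⟨(x : A) * (y : A), hmulF p q _ x.2 _ y.2⟩)
    (r d : ℕ) (hr : 1 ≤ r) (hd : 1 ≤ d)
    (halg : ∀ s ∈ F r, s ^ d ∈ Submodule.span k ((fun i : ℕ => s ^ i) '' Set.Icc 1 (d - 1))) :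
    ∀ b ∈ ⨆ n ∈ Finset.Icc 1 r, LinearMap.range (φ n),
      b ^ ((d - 1) * r + 1) = 0 ∧ b ^ (r * d) = 0 :=
  gr_nilpotency_index_bound_general k A F hmono hmulF B φ hker hmulφ r d hr hd halg
end

section
/- Let A be a unital associative k-algebra with filtration {A_n}_{n≥0} and suppose every element of the Rees algebra R = ⊕_{n≥0} x^n A_n ⊆ A[x] is integral over k[x]. Then every element of gr(A)_{≥1} is nilpotent. -/
/-!
An element of `gr(A)_{≥1}` is the image `p̄` of some `p ∈ R` without constant term, and
`R / xR ≅ gr(A)`. Reducing an integral equation of `p` over `k[x]` modulo `x` gives a nonzero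
`f ∈ k[t]` with `f(0) = 0` and `f(p̄) = 0`. Write `f = t^m g` with `m ≥ 1` and `g(0) ≠ 0`: then
`g(p̄)` is a nonzero scalar plus terms of positive degree, and comparing lowest-degree components
shows that `s̄ g(p̄) = 0` forces `s̄ = 0` for `s̄ = p̄^m`.
-/

open Polynomial Finset

theorem Polynomial.coeff_zero_pow {R : Type*} [Semiring R] (p : R[X]) (m : ℕ) :
    (p ^ m).coeff 0 = p.coeff 0 ^ m := by
  rw [← constantCoeff_apply, map_pow, constantCoeff_apply]

namespace Rees

variable {k A : Type*} [Field k] [Ring A] [Algebra k A] (F : ℕ → Submodule k A)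

def reesSubmodule : Submodule k A[X] where
  carrier := {p | ∀ n, p.coeff n ∈ F n}
  add_mem' hp hq n := by simpa using add_mem (hp n) (hq n)
  zero_mem' n := by simp
  smul_mem' c p hp n := by simpa using (F n).smul_mem c (hp n)

/-- The ideal `x R` of the Rees algebra `R = reesSubmodule F`. -/
def xReesSubmodule : Submodule k A[X] where
  carrier := {p | p.coeff 0 = 0 ∧ ∀ n, p.coeff (n + 1) ∈ F n}
  add_mem' hp hq := ⟨by simp [hp.1, hq.1], fun n => by simpa using add_mem (hp.2 n) (hq.2 n)⟩
  zero_mem' := ⟨rfl, fun n => by simp⟩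
  smul_mem' c p hp := ⟨by simp [hp.1], fun n => by simpa using (F n).smul_mem c (hp.2 n)⟩

variable {F} {p q : A[X]}

theorem mul_mem_reesSubmodule [SetLike.GradedMul F] (hp : p ∈ reesSubmodule F)
    (hq : q ∈ reesSubmodule F) : p * q ∈ reesSubmodule F := fun n => by
  rw [coeff_mul]
  exact sum_mem fun ij hij => mem_antidiagonal.1 hij ▸ SetLike.mul_mem_graded (hp ij.1) (hq ij.2)

theorem pow_succ_mem_reesSubmodule [SetLike.GradedMul F] (hp : p ∈ reesSubmodule F) (m : ℕ) :
    p ^ (m + 1) ∈ reesSubmodule F := by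
  induction m with
  | zero => simpa using hp
  | succ m ih => rw [pow_succ]; exact mul_mem_reesSubmodule ih hp

theorem mul_aeval_mem_reesSubmodule [SetLike.GradedMul F] (hp : p ∈ reesSubmodule F)
    (f : k[X]) : p * aeval p f ∈ reesSubmodule F := by
  induction f using Polynomial.induction_on' with
  | add f g hf hg => rw [map_add, mul_add]; exact add_mem hf hg
  | monomial n a =>
    rw [aeval_monomial, ← Algebra.smul_def, mul_smul_comm, ← pow_succ']
    exact Submodule.smul_mem _ a (pow_succ_mem_reesSubmodule hp n)

theorem map_mul_mem_reesSubmodule (hmono : Monotone F) (f : k[X]) (hp : p ∈ reesSubmodule F) :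
    f.map (algebraMap k A) * p ∈ reesSubmodule F := fun n => by
  rw [coeff_mul]
  refine sum_mem fun ij hij => ?_
  rw [coeff_map, ← Algebra.smul_def]
  exact Submodule.smul_mem _ _ (hmono (HasAntidiagonal.antidiagonal.snd_le hij) (hp ij.2))

theorem X_mul_mem_xReesSubmodule (hp : p ∈ reesSubmodule F) : X * p ∈ xReesSubmodule F :=
  ⟨by simp, fun n => by simpa using hp n⟩

theorem map_mul_sub_smul_mem_xReesSubmodule (hmono : Monotone F) (f : k[X])
    (hp : p ∈ reesSubmodule F) :
    f.map (algebraMap k A) * p - f.coeff 0 • p ∈ xReesSubmodule F := by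
  have hf : f.map (algebraMap k A) * p - f.coeff 0 • p =
      X * (f.divX.map (algebraMap k A) * p) := by
    nth_rw 1 [← X_mul_divX_add f]
    rw [Polynomial.map_add, Polynomial.map_mul, map_X, map_C, add_mul, mul_assoc, C_mul',
      algebraMap_smul, add_sub_cancel_right]
  rw [hf]
  exact X_mul_mem_xReesSubmodule (map_mul_mem_reesSubmodule hmono _ hp)

theorem mem_xReesSubmodule_of_smul_add_mul_mem [SetLike.GradedMul F] {c : k} (hc : c ≠ 0)
    {s e : A[X]} (hs : s.coeff 0 = 0) (he : e ∈ reesSubmodule F) (he0 : e.coeff 0 = 0)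
    (h : c • s + s * e ∈ xReesSubmodule F) : s ∈ xReesSubmodule F := by
  refine ⟨hs, fun n => ?_⟩
  induction n using Nat.strong_induction_on with
  | _ n ih =>
  have hse : (s * e).coeff (n + 1) ∈ F n := by
    rw [coeff_mul]
    refine sum_mem fun ij hij => ?_
    obtain ⟨_ | i, _ | j⟩ := ij
    · simp [hs]
    · simp [hs]
    · simp [he0]
    have hij : i + (j + 1) = n := by rw [HasAntidiagonal.mem_antidiagonal] at hij; omega
    exact hij ▸ SetLike.mul_mem_graded (ih i (by omega)) (he (j + 1))
  have hcs : c • s.coeff (n + 1) ∈ F n := by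
    simpa using sub_mem (h.2 n) hse
  simpa [smul_smul, inv_mul_cancel₀ hc] using (F n).smul_mem c⁻¹ hcs

theorem exists_aeval_mem_xReesSubmodule [SetLike.GradedMul F] (hmono : Monotone F)
    (hp : p ∈ reesSubmodule F) {N : ℕ} {q : ℕ → k[X]}
    (hq : p ^ N + ∑ i ∈ range N, (q i).map (algebraMap k A) * p ^ i = 0) :
    ∃ f : k[X], f ≠ 0 ∧ f.coeff 0 = 0 ∧ aeval p f ∈ xReesSubmodule F := by
  set g : k[X] := X ^ N + ∑ i ∈ range N, C ((q i).coeff 0) * X ^ i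
  have hg : g.Monic := monic_X_pow_add <|
    (degree_lt_iff_coeff_zero _ _).2 fun m hm => by simp; omega
  refine ⟨g * X, hg.ne_zero ∘ (mul_eq_zero.1 · |>.resolve_right X_ne_zero), by simp, ?_⟩
  have key : aeval p (g * X) = -∑ i ∈ range N,
      ((q i).map (algebraMap k A) * p ^ (i + 1) - (q i).coeff 0 • p ^ (i + 1)) := by
    rw [← sub_zero (aeval p (g * X)), ← zero_mul p, ← hq]
    simp [g, add_mul, sum_mul, mul_assoc, pow_succ, Algebra.smul_def]
  rw [key]
  exact neg_mem (sum_mem fun i _ =>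
    map_mul_sub_smul_mem_xReesSubmodule hmono _ (pow_succ_mem_reesSubmodule hp i))

theorem exists_pow_mem_xReesSubmodule_of_aeval_mem [SetLike.GradedMul F]
    (hp : p ∈ reesSubmodule F) (hp0 : p.coeff 0 = 0) {f : k[X]} (hf : f ≠ 0)
    (hf0 : f.coeff 0 = 0) (h : aeval p f ∈ xReesSubmodule F) :
    ∃ m, p ^ (m + 1) ∈ xReesSubmodule F := by
  obtain ⟨g, hfg, hg⟩ := exists_eq_pow_rootMultiplicity_mul_and_not_dvd f hf 0
  rw [C_0, sub_zero] at hfg hg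
  obtain ⟨m, hm⟩ : ∃ m, f.rootMultiplicity 0 = m + 1 :=
    Nat.exists_eq_add_one.2 <| (rootMultiplicity_pos hf).2 <| by
      rwa [IsRoot, ← coeff_zero_eq_eval_zero]
  have hfp : aeval p f = g.coeff 0 • p ^ (m + 1) + p ^ (m + 1) * (p * aeval p g.divX) := by
    nth_rw 1 [hfg, hm, ← X_mul_divX_add g]
    rw [map_mul, map_pow, aeval_X, map_add, aeval_C, map_mul, aeval_X, mul_add, add_comm,
      ← Algebra.commutes, ← Algebra.smul_def]
  refine ⟨m, mem_xReesSubmodule_of_smul_add_mul_mem (mt X_dvd_iff.2 hg)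
    (by rw [coeff_zero_pow, hp0, zero_pow m.succ_ne_zero]) (mul_aeval_mem_reesSubmodule hp g.divX)
    (by rw [mul_coeff_zero, hp0, zero_mul]) (hfp ▸ h)⟩

section lsum

variable {B : Type*} [Ring B] [Algebra k B] {ψ : ℕ → A →ₗ[k] B}

theorem lsum_mul_of_mem_reesSubmodule
    (hψ : ∀ i j, ∀ a ∈ F i, ∀ b ∈ F j, ψ (i + j) (a * b) = ψ i a * ψ j b)
    (hp : p ∈ reesSubmodule F) (hq : q ∈ reesSubmodule F) :
    lsum ψ (p * q) = lsum ψ p * lsum ψ q := by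
  rw [mul_eq_sum_sum, map_sum, lsum_apply, lsum_apply, sum_def, sum_def, sum_mul_sum]
  refine sum_congr rfl fun i _ => ?_
  rw [Polynomial.sum_def, map_sum]
  refine sum_congr rfl fun j _ => ?_
  rw [lsum_apply, sum_monomial_index _ _ (map_zero (ψ (i + j)))]
  exact hψ i j _ (hp i) _ (hq j)

theorem lsum_pow_succ_of_mem_reesSubmodule [SetLike.GradedMul F]
    (hψ : ∀ i j, ∀ a ∈ F i, ∀ b ∈ F j, ψ (i + j) (a * b) = ψ i a * ψ j b)
    (hp : p ∈ reesSubmodule F) (m : ℕ) : lsum ψ (p ^ (m + 1)) = lsum ψ p ^ (m + 1) := by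
  induction m with
  | zero => rw [pow_one, pow_one]
  | succ m ih =>
    rw [pow_succ, lsum_mul_of_mem_reesSubmodule hψ (pow_succ_mem_reesSubmodule hp m) hp, ih,
      ← pow_succ]

theorem lsum_eq_zero_of_mem_xReesSubmodule (hψ : ∀ n, ∀ a ∈ F n, ψ (n + 1) a = 0)
    (hp : p ∈ xReesSubmodule F) : lsum ψ p = 0 := by
  rw [lsum_apply, sum_def]
  refine sum_eq_zero fun n _ => ?_
  cases n with
  | zero => rw [hp.1, map_zero]
  | succ n => exact hψ n _ (hp.2 n)

theorem exists_mem_reesSubmodule_lsum_eq {b : B}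
    (hb : b ∈ ⨆ n, (F (n + 1)).map (ψ (n + 1))) :
    ∃ p ∈ reesSubmodule F, p.coeff 0 = 0 ∧ lsum ψ p = b := by
  induction hb using Submodule.iSup_induction' with
  | mem n b hb =>
    obtain ⟨a, ha, rfl⟩ := hb
    refine ⟨monomial (n + 1) a, fun m => ?_, by simp, by simp⟩
    rw [coeff_monomial]
    split_ifs with h
    · exact h ▸ ha
    · exact zero_mem _
  | zero => exact ⟨0, zero_mem _, coeff_zero 0, map_zero _⟩
  | add b c _ _ hb hc =>
    obtain ⟨p, hp, hp0, rfl⟩ := hb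
    obtain ⟨q, hq, hq0, rfl⟩ := hc
    exact ⟨p + q, add_mem hp hq, by rw [coeff_add, hp0, hq0, add_zero], map_add _ _ _⟩

end lsum

end Rees

open Rees

theorem gr_nil_of_rees_integral_general
    (k : Type*) [Field k] (A : Type*) [Ring A] [Algebra k A]
    (F : ℕ → Submodule k A)
    (hmono : Monotone F)
    (hmulF : ∀ i j : ℕ, ∀ x ∈ F i, ∀ y ∈ F j, x * y ∈ F (i + j))
    (hint : ∀ p : Polynomial A, (∀ n : ℕ, p.coeff n ∈ F n) →
      ∃ n : ℕ, 1 ≤ n ∧ ∃ q : ℕ → Polynomial k,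
        p ^ n + ∑ i ∈ Finset.range n, (q i).map (algebraMap k A) * p ^ i = 0)
    (B : Type*) [Ring B] [Algebra k B]
    (φ : ∀ n : ℕ, F n →ₗ[k] B)
    (hker : ∀ n : ℕ, ∀ x : F (n + 1), φ (n + 1) x = 0 ↔ (x : A) ∈ F n)
    (hmulφ : ∀ p q : ℕ, ∀ x : F p, ∀ y : F q,
      φ p x * φ q y = φ (p + q) ⟨(x : A) * (y : A), hmulF p q _ x.2 _ y.2⟩) :
    ∀ b ∈ ⨆ n : ℕ, LinearMap.range (φ (n + 1)), IsNilpotent b := by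
  intro b hb
  have : SetLike.GradedMul F := ⟨@fun i j _ _ hx hy => hmulF i j _ hx _ hy⟩
  -- Extending each `φ n` to all of `A` turns the symbol map `R → gr A` into `Polynomial.lsum ψ`.
  choose ψ hψ using fun n => LinearMap.exists_extend (φ n)
  have hψφ : ∀ n (a : F n), ψ n a = φ n a := fun n => LinearMap.congr_fun (hψ n)
  have hmulψ : ∀ i j, ∀ a ∈ F i, ∀ b ∈ F j, ψ (i + j) (a * b) = ψ i a * ψ j b :=
    fun i j a ha b hb => by simpa only [← hψφ] using (hmulφ i j ⟨a, ha⟩ ⟨b, hb⟩).symm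
  have hkerψ : ∀ n, ∀ a ∈ F n, ψ (n + 1) a = 0 := fun n a ha => by
    rw [hψφ (n + 1) ⟨a, hmono n.le_succ ha⟩]
    exact (hker n _).2 ha
  simp only [← hψ, LinearMap.range_comp, Submodule.range_subtype] at hb
  obtain ⟨p, hp, hp0, rfl⟩ := exists_mem_reesSubmodule_lsum_eq hb
  obtain ⟨N, -, q, hq⟩ := hint p hp
  obtain ⟨f, hf, hf0, hfp⟩ := exists_aeval_mem_xReesSubmodule hmono hp hq
  obtain ⟨m, hm⟩ := exists_pow_mem_xReesSubmodule_of_aeval_mem hp hp0 hf hf0 hfp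
  exact ⟨m + 1, by rw [← lsum_pow_succ_of_mem_reesSubmodule hmulψ hp,
    lsum_eq_zero_of_mem_xReesSubmodule hkerψ hm]⟩

/-- Let `A` be a unital associative `k`-algebra with filtration `{F_n}` and suppose every
element of the Rees algebra `R = ⊕_{n≥0} x^n F_n ⊆ A[x]` (the polynomials `p` with
`p.coeff n ∈ F_n` for all `n`) is integral over `k[x]`, i.e. satisfies
`p^n + q_{n−1}(x) p^{n−1} + ⋯ + q_0(x) = 0` for some `n ≥ 1` and `q_i(x) ∈ k[x]`.
Then every element of `gr(A)_{≥1}` is nilpotent.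

The associated graded algebra `gr(A) = ⊕_{n≥0} F_n/F_{n−1}` (with `F_{−1} = 0`) is
presented by an algebra `B` together with `k`-linear maps `φ n : F n → B` realizing the
quotient maps `F_n → F_n/F_{n−1} ⊆ gr(A)`: the kernel of `φ n` is exactly `F_{n-1}`
(with `φ 0` injective), and `φ p x * φ q y = φ (p+q) (x*y)`, which encodes the
multiplication of `gr(A)`.  The part `gr(A)_{≥1}` is then `⨆ n, range (φ (n+1))`. -/
theorem gr_nil_of_rees_integral
    (k : Type*) [Field k] (A : Type*) [Ring A] [Algebra k A]
    (F : ℕ → Submodule k A)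
    (hmono : Monotone F)
    (hexh : ∀ a : A, ∃ n : ℕ, a ∈ F n)
    (hmulF : ∀ i j : ℕ, ∀ x ∈ F i, ∀ y ∈ F j, x * y ∈ F (i + j))
    (hint : ∀ p : Polynomial A, (∀ n : ℕ, p.coeff n ∈ F n) →
      ∃ n : ℕ, 1 ≤ n ∧ ∃ q : ℕ → Polynomial k,
        p ^ n + ∑ i ∈ Finset.range n, (q i).map (algebraMap k A) * p ^ i = 0)
    (B : Type*) [Ring B] [Algebra k B]
    (φ : ∀ n : ℕ, F n →ₗ[k] B)
    (hker0 : ∀ x : F 0, φ 0 x = 0 ↔ (x : A) = 0)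
    (hker : ∀ n : ℕ, ∀ x : F (n + 1), φ (n + 1) x = 0 ↔ (x : A) ∈ F n)
    (hmulφ : ∀ p q : ℕ, ∀ x : F p, ∀ y : F q,
      φ p x * φ q y = φ (p + q) ⟨(x : A) * (y : A), hmulF p q _ x.2 _ y.2⟩) :
    ∀ b ∈ ⨆ n : ℕ, LinearMap.range (φ (n + 1)), IsNilpotent b :=
  gr_nil_of_rees_integral_general k A F hmono hmulF hint B φ hker hmulφ
end
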